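/- arXiv:2406.10427 — 2 statements merged into one kernel-verified Lean document; each statement's English description precedes it below -/
import Mathlib

section
/- Let M be a Markov kernel from ℝ^d to a finite label set Y that is f-DP for B_p(r) neighbourhoods, where f : [0,1] → [0,1] is non-increasing. Let X ∈ ℝ^d, let y₊ ∈ Y, and let p₊, p₋ ∈ [0,1] satisfy P(M(X) = y₊) ≥ p₊ ≥ p₋ ≥ max_{y ≠ y₊} P(M(X) = y). If f(1 − p₊) ≥ 1 − f(p₋), then for every e ∈ ℝ^d with ‖e‖_p ≤ r and every y ∈ Y, P(M(X+e) = y₊) ≥ P(M(X+e) = y); that is, y₊ remains a most probable class of M(X+e). -/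
open MeasureTheory ProbabilityTheory Real
open scoped NNReal ENNReal

/-- Standard normal CDF Φ. -/
noncomputable def Phi (x : ℝ) : ℝ := ((gaussianReal 0 1) (Set.Iic x)).toReal

/-- Inverse of the standard normal CDF, Φ⁻¹. -/
noncomputable def PhiInv (q : ℝ) : ℝ := Function.invFun Phi q

/-- The trade-off function of the Gaussian mechanism, `G_μ(α) = Φ(Φ⁻¹(1-α) − μ)`. -/
noncomputable def Gmu (μ α : ℝ) : ℝ := Phi (PhiInv (1 - α) - μ)

/-- Euclidean (L2) norm on `ℝ^n`. -/
noncomputable def l2norm {n : ℕ} (x : Fin n → ℝ) : ℝ := Real.sqrt (∑ i, (x i) ^ 2)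

/-- Maximum (L∞) norm on `ℝ^n`. -/
noncomputable def linftyNorm {n : ℕ} (x : Fin n → ℝ) : ℝ := ⨆ i, |x i|

/-- Lp norm on `ℝ^n`. -/
noncomputable def lpNorm {n : ℕ} (p : ℝ) (x : Fin n → ℝ) : ℝ := (∑ i, |x i| ^ p) ^ (1 / p)

/-- `T(P,Q) ≥ f`: every measurable `[0,1]`-valued test `φ` has type II error
`1 − ∫ φ dQ` at least `f` of its level `∫ φ dP`. -/
def TradeoffGE {Ω : Type*} [MeasurableSpace Ω] (P Q : Measure Ω) (f : ℝ → ℝ) : Prop :=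
  ∀ φ : Ω → ℝ, Measurable φ → (∀ ω, φ ω ∈ Set.Icc (0 : ℝ) 1) →
    1 - ∫ ω, φ ω ∂Q ≥ f (∫ ω, φ ω ∂P)

/-- The Gaussian measure `N(v, s·I_d)` on `ℝ^d` (spherical covariance `s ≥ 0`). -/
noncomputable def gaussPi (d : ℕ) (v : Fin d → ℝ) (s : ℝ≥0) : Measure (Fin d → ℝ) :=
  Measure.pi fun i => gaussianReal (v i) s

/-
Test the two hypotheses with indicator functions. The indicator of `{y₊}ᶜ` gives
`P(M(X+e) = y₊) ≥ f(1 - P(M(X) = y₊)) ≥ f(1 - p₊)`, and the indicator of `{y}` gives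
`P(M(X+e) = y) ≤ 1 - f(P(M(X) = y)) ≤ 1 - f(p₋)`; the certificate `f(1 - p₊) ≥ 1 - f(p₋)` joins them.
-/

theorem lpNorm_neg {n : ℕ} (p : ℝ) (x : Fin n → ℝ) : lpNorm p (-x) = lpNorm p x := by
  simp only [_root_.lpNorm, Pi.neg_apply, abs_neg]

namespace TradeoffGE

variable {Ω : Type*} [MeasurableSpace Ω] {P Q : Measure Ω} {f : ℝ → ℝ} {s t : Set Ω}

theorem le_one_sub_measureReal (h : TradeoffGE P Q f) (hs : MeasurableSet s) :
    f (P.real s) ≤ 1 - Q.real s := by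
  have hφ : ∀ ω, s.indicator (1 : Ω → ℝ) ω ∈ Set.Icc (0 : ℝ) 1 := fun ω => by
    by_cases hω : ω ∈ s <;> simp [hω]
  simpa only [integral_indicator_one hs] using
    h (s.indicator 1) (measurable_const.indicator hs) hφ

theorem le_measureReal_of_compl [IsProbabilityMeasure P] [IsProbabilityMeasure Q]
    (h : TradeoffGE P Q f) (hs : MeasurableSet s) :
    f (1 - P.real s) ≤ Q.real s := by
  have := h.le_one_sub_measureReal hs.compl
  rw [probReal_compl_eq_one_sub hs, probReal_compl_eq_one_sub hs] at this
  linarith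

theorem measureReal_le_measureReal [IsProbabilityMeasure P] [IsProbabilityMeasure Q]
    (h : TradeoffGE P Q f) (hf : AntitoneOn f (Set.Icc 0 1))
    (hs : MeasurableSet s) (ht : MeasurableSet t) {pPlus pMinus : ℝ}
    (hpPlus : pPlus ∈ Set.Icc (0 : ℝ) 1) (hpMinus : pMinus ∈ Set.Icc (0 : ℝ) 1)
    (hPs : pPlus ≤ P.real s) (hPt : P.real t ≤ pMinus) (hcert : 1 - f pMinus ≤ f (1 - pPlus)) :
    Q.real t ≤ Q.real s := by
  have hQs : f (1 - pPlus) ≤ Q.real s := by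
    have hPs_mem : 1 - P.real s ∈ Set.Icc (0 : ℝ) 1 :=
      ⟨sub_nonneg.2 measureReal_le_one, sub_le_self 1 measureReal_nonneg⟩
    have hpPlus_mem : 1 - pPlus ∈ Set.Icc (0 : ℝ) 1 :=
      ⟨sub_nonneg.2 hpPlus.2, sub_le_self 1 hpPlus.1⟩
    exact (hf hPs_mem hpPlus_mem (by linarith)).trans (h.le_measureReal_of_compl hs)
  have hQt : Q.real t ≤ 1 - f pMinus := by
    have := hf ⟨measureReal_nonneg, measureReal_le_one⟩ hpMinus hPt
    linarith [h.le_one_sub_measureReal ht]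
  linarith

end TradeoffGE

theorem fdp_robustness_general {d : ℕ} {Y : Type*} [MeasurableSpace Y]
    [MeasurableSingletonClass Y]
    (p r : ℝ) (f : ℝ → ℝ)
    (hf_anti : AntitoneOn f (Set.Icc (0 : ℝ) 1))
    (M : ProbabilityTheory.Kernel (Fin d → ℝ) Y) [ProbabilityTheory.IsMarkovKernel M]
    (hDP : ∀ X X' : Fin d → ℝ, lpNorm p (X - X') ≤ r → TradeoffGE (M X) (M X') f)
    (X : Fin d → ℝ) (yPlus : Y) (pPlus pMinus : ℝ)
    (hpPlus : pPlus ∈ Set.Icc (0 : ℝ) 1) (hpMinus : pMinus ∈ Set.Icc (0 : ℝ) 1)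
    (hplus : ((M X) {yPlus}).toReal ≥ pPlus)
    (hminus : ∀ y : Y, y ≠ yPlus → ((M X) {y}).toReal ≤ pMinus)
    (hcert : f (1 - pPlus) ≥ 1 - f pMinus) :
    ∀ e : Fin d → ℝ, lpNorm p e ≤ r → ∀ y : Y,
      ((M (X + e)) {yPlus}).toReal ≥ ((M (X + e)) {y}).toReal := by
  intro e he y
  by_cases hy : y = yPlus
  · rw [hy]
  have hT : TradeoffGE (M X) (M (X + e)) f :=
    hDP X (X + e) (by rwa [sub_add_cancel_left, lpNorm_neg])
  exact hT.measureReal_le_measureReal hf_anti (measurableSet_singleton yPlus)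
    (measurableSet_singleton y) hpPlus hpMinus hplus (hminus y hy) hcert

/-- **f-DP robustness of the most probable class.**
If a Markov kernel `M` from `ℝ^d` to a finite label set `Y` is `f`-DP for `B_p(r)`
neighbourhoods, `f` non-increasing on `[0,1]`, `P(M(X) = yPlus) ≥ pPlus ≥ pMinus ≥ max_{y ≠ yPlus} P(M(X) = y)`,
and `f(1 − pPlus) ≥ 1 − f(pMinus)`, then for every `e` with `‖e‖_p ≤ r`, `yPlus` remains a most
probable class of `M(X + e)`. -/
theorem fdp_robustness {d : ℕ} {Y : Type*} [Fintype Y] [MeasurableSpace Y]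
    [MeasurableSingletonClass Y]
    (p r : ℝ) (f : ℝ → ℝ)
    (hf_anti : AntitoneOn f (Set.Icc (0 : ℝ) 1))
    (hf_mem : ∀ x ∈ Set.Icc (0 : ℝ) 1, f x ∈ Set.Icc (0 : ℝ) 1)
    (M : ProbabilityTheory.Kernel (Fin d → ℝ) Y) [ProbabilityTheory.IsMarkovKernel M]
    (hDP : ∀ X X' : Fin d → ℝ, lpNorm p (X - X') ≤ r → TradeoffGE (M X) (M X') f)
    (X : Fin d → ℝ) (yPlus : Y) (pPlus pMinus : ℝ)
    (hpPlus : pPlus ∈ Set.Icc (0 : ℝ) 1) (hpMinus : pMinus ∈ Set.Icc (0 : ℝ) 1)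
    (hplus : ((M X) {yPlus}).toReal ≥ pPlus)
    (horder : pPlus ≥ pMinus)
    (hminus : ∀ y : Y, y ≠ yPlus → ((M X) {y}).toReal ≤ pMinus)
    (hcert : f (1 - pPlus) ≥ 1 - f pMinus) :
    ∀ e : Fin d → ℝ, lpNorm p e ≤ r → ∀ y : Y,
      ((M (X + e)) {yPlus}).toReal ≥ ((M (X + e)) {y}).toReal :=
  fdp_robustness_general p r f hf_anti M hDP X yPlus pPlus pMinus hpPlus hpMinus hplus hminus hcert
end

section
/- Let σ > 0 and p₊, p₋ ∈ (0,1). Then for every r ∈ ℝ, the inequality Φ(Φ⁻¹(p₊) − r/σ) ≥ 1 − Φ(Φ⁻¹(1 − p₋) − r/σ) holds if and only if r ≤ (σ/2)(Φ⁻¹(p₊) − Φ⁻¹(p₋)). Equivalently, G_{r/σ}(1 − p₊) ≥ 1 − G_{r/σ}(p₋) exactly when r ≤ (σ/2)(Φ⁻¹(p₊) − Φ⁻¹(p₋)). -/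
open MeasureTheory ProbabilityTheory Real
open scoped NNReal ENNReal

/-!
Both sides of the inequality are values of Φ: the symmetry of the standard Gaussian gives
`1 - Φ(y) = Φ(-y)` and `Φ⁻¹(1 - p) = -Φ⁻¹(p)`, so the right-hand side is `Φ(Φ⁻¹(p₋) + r/σ)`.
As Φ is strictly increasing, the inequality is the linear one
`Φ⁻¹(p₋) + r/σ ≤ Φ⁻¹(p₊) - r/σ`.
-/

open Set

namespace ProbabilityTheory

variable {μ : Measure ℝ} [IsProbabilityMeasure μ]

lemma measure_Ioc_eq_ofReal_cdf_sub (a b : ℝ) :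
    μ (Ioc a b) = ENNReal.ofReal (cdf μ b - cdf μ a) := by
  conv_lhs => rw [← measure_cdf μ]
  exact (cdf μ).measure_Ioc a b

lemma strictMono_cdf (hμ : ∀ a b, a < b → μ (Ioc a b) ≠ 0) : StrictMono (cdf μ) :=
  fun a b hab => by
    simpa [measure_Ioc_eq_ofReal_cdf_sub] using hμ a b hab

lemma continuous_cdf [NullSingletonClass μ] : Continuous (cdf μ) := by
  refine continuous_iff_continuousAt.2 fun x =>
    continuousAt_iff_continuous_left_right.2 ⟨?_, (cdf μ).right_continuous x⟩
  rw [← continuousWithinAt_Iio_iff_Iic, (monotone_cdf μ).continuousWithinAt_Iio_iff_leftLim_eq]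
  have hx := (cdf μ).measure_singleton x
  rw [measure_cdf, measure_singleton, eq_comm, ENNReal.ofReal_eq_zero, sub_nonpos] at hx
  exact le_antisymm ((monotone_cdf μ).leftLim_le le_rfl) hx

lemma exists_cdf_eq [NullSingletonClass μ] {q : ℝ} (hq : q ∈ Ioo 0 1) :
    ∃ x, cdf μ x = q := by
  obtain ⟨a, ha⟩ := ((tendsto_cdf_atBot μ).eventually_lt_const hq.1).exists
  obtain ⟨b, hb⟩ := ((tendsto_cdf_atTop μ).eventually_const_lt hq.2).exists
  exact mem_range_of_exists_le_of_exists_ge continuous_cdf ⟨a, ha.le⟩ ⟨b, hb.le⟩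

lemma cdf_neg [NullSingletonClass μ] (hμ : μ.map Neg.neg = μ) (x : ℝ) :
    cdf μ (-x) = 1 - cdf μ x := by
  calc cdf μ (-x) = (μ.map Neg.neg).real (Iic (-x)) := by rw [hμ, cdf_eq_real]
    _ = μ.real (Ioi x)ᶜᶜ := by
      rw [map_measureReal_apply measurable_neg measurableSet_Iic, compl_compl,
        measureReal_congr Ioi_ae_eq_Ici, neg_preimage, neg_Iic, neg_neg]
    _ = 1 - cdf μ x := by
      rw [probReal_compl_eq_one_sub measurableSet_Ioi.compl, compl_Ioi, cdf_eq_real]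

end ProbabilityTheory

open ProbabilityTheory

instance : NullSingletonClass (gaussianReal 0 1) := nullSingletonClass_gaussianReal one_ne_zero

lemma Phi_eq_cdf : Phi = cdf (gaussianReal 0 1) := funext fun x => (cdf_eq_real _ x).symm

lemma Phi_strictMono : StrictMono Phi := by
  rw [Phi_eq_cdf]
  refine strictMono_cdf fun a b hab h0 => ?_
  have hvol := gaussianReal_absolutelyContinuous' 0 one_ne_zero h0
  rw [Real.volume_Ioc, ENNReal.ofReal_eq_zero, sub_nonpos] at hvol
  exact hab.not_ge hvol

lemma Phi_neg (x : ℝ) : Phi (-x) = 1 - Phi x := by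
  rw [Phi_eq_cdf]
  exact cdf_neg (by simpa using gaussianReal_map_neg (μ := 0) (v := 1)) x

lemma PhiInv_one_sub {p : ℝ} (hp : p ∈ Ioo 0 1) : PhiInv (1 - p) = -PhiInv p := by
  have hPhi : Phi (PhiInv p) = p := Function.invFun_eq (Phi_eq_cdf ▸ exists_cdf_eq hp)
  rw [← hPhi, ← Phi_neg, PhiInv, Function.leftInverse_invFun Phi_strictMono.injective, hPhi]

theorem radius_threshold_iff_general (σ : ℝ) (hσ : 0 < σ) (pPlus pMinus : ℝ)
    (hpMinus : pMinus ∈ Set.Ioo (0 : ℝ) 1) :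
    ∀ r : ℝ,
      ((Phi (PhiInv pPlus - r / σ) ≥ 1 - Phi (PhiInv (1 - pMinus) - r / σ)) ↔
        r ≤ σ / 2 * (PhiInv pPlus - PhiInv pMinus)) ∧
      ((Gmu (r / σ) (1 - pPlus) ≥ 1 - Gmu (r / σ) pMinus) ↔
        r ≤ σ / 2 * (PhiInv pPlus - PhiInv pMinus)) := by
  intro r
  have hPhi : Phi (PhiInv pPlus - r / σ) ≥ 1 - Phi (PhiInv (1 - pMinus) - r / σ) ↔
      r ≤ σ / 2 * (PhiInv pPlus - PhiInv pMinus) := by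
    rw [← Phi_neg, PhiInv_one_sub hpMinus, ge_iff_le, Phi_strictMono.le_iff_le,
      div_mul_eq_mul_div, mul_div_assoc, ← div_le_iff₀' hσ]
    constructor <;> intro h <;> linarith
  exact ⟨hPhi, by rwa [Gmu, Gmu, sub_sub_cancel]⟩

/-- **The certified-radius threshold for Gaussian RS.**
For `σ > 0` and `p₊, p₋ ∈ (0,1)`, `Φ(Φ⁻¹(p₊) − r/σ) ≥ 1 − Φ(Φ⁻¹(1 − p₋) − r/σ)` holds iff
`r ≤ (σ/2)(Φ⁻¹(p₊) − Φ⁻¹(p₋))`; equivalently `G_{r/σ}(1 − p₊) ≥ 1 − G_{r/σ}(p₋)`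
exactly when `r ≤ (σ/2)(Φ⁻¹(p₊) − Φ⁻¹(p₋))`. -/
theorem radius_threshold_iff (σ : ℝ) (hσ : 0 < σ) (pPlus pMinus : ℝ)
    (hpPlus : pPlus ∈ Set.Ioo (0 : ℝ) 1) (hpMinus : pMinus ∈ Set.Ioo (0 : ℝ) 1) :
    ∀ r : ℝ,
      ((Phi (PhiInv pPlus - r / σ) ≥ 1 - Phi (PhiInv (1 - pMinus) - r / σ)) ↔
        r ≤ σ / 2 * (PhiInv pPlus - PhiInv pMinus)) ∧
      ((Gmu (r / σ) (1 - pPlus) ≥ 1 - Gmu (r / σ) pMinus) ↔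
        r ≤ σ / 2 * (PhiInv pPlus - PhiInv pMinus)) :=
  radius_threshold_iff_general σ hσ pPlus pMinus hpMinus
end
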